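/- Let G be a connected finite simple graph with spectral radius ρ, let x be a positive eigenvector of the adjacency matrix of G corresponding to ρ, and let u* be a vertex at which x attains its maximum entry. Set N = N(u*), W = V(G) ∖ N[u*], A₊ = {v ∈ N : v has at least one neighbor in N}, and A₀ = N ∖ A₊. Then ρ² − ρ ≤ |N| + 2·e(A₊) − |A₊| + e(N, W) − Σ_{v ∈ A₀} x_v / x_{u*}, where e(A₊) is the number of edges of G with both endpoints in A₊ and e(N, W) is the number of edges of G with one endpoint in N and the other in W. -/

import Mathlib

open SimpleGraph Matrix

/-- `H` occurs as a subgraph of `G`: an injective map sending adjacent vertices to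
adjacent vertices. -/
def ContainsSub {α β : Type*} (H : SimpleGraph α) (G : SimpleGraph β) : Prop :=
  ∃ f : α → β, Function.Injective f ∧ ∀ ⦃a b⦄, H.Adj a b → G.Adj (f a) (f b)

/-- The graph `H(4,3)`: a 4-cycle `0-1-2-3-0` and a triangle `0-4-5-0`
sharing the common vertex `0`. -/
def H43 : SimpleGraph (Fin 6) :=
  SimpleGraph.fromEdgeSet {s(0,1), s(1,2), s(2,3), s(3,0), s(0,4), s(4,5), s(5,0)}

/-- `G` is `H(4,3)`-free. -/
def H43Free {β : Type*} (G : SimpleGraph β) : Prop := ¬ ContainsSub H43 G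

open Classical in
/-- The real adjacency matrix of a simple graph. -/
noncomputable def adjMat {V : Type*} (G : SimpleGraph V) : Matrix V V ℝ :=
  fun i j => if G.Adj i j then 1 else 0

/-- The spectral radius of a finite simple graph: the largest eigenvalue of its
adjacency matrix. -/
noncomputable def specRad {V : Type*} [Fintype V] (G : SimpleGraph V) : ℝ :=
  sSup {t : ℝ | ∃ x : V → ℝ, x ≠ 0 ∧ (adjMat G).mulVec x = t • x}

/-- `S_{n,2} = K₂ ∨ (n-2)K₁`: vertices `0` and `1` are adjacent to everything. -/
def Sgraph (n : ℕ) : SimpleGraph (Fin n) where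
  Adj i j := i ≠ j ∧ (i.val < 2 ∨ j.val < 2)
  symm := by constructor; rintro i j ⟨h1, h2⟩; exact ⟨h1.symm, h2.symm⟩
  loopless := by constructor; rintro i ⟨h1, _⟩; exact h1 rfl

/-- `S⁻_{n,2}`: the graph `S_{n,2}` with the edge `{1,2}` (an edge incident to a
vertex of degree two) deleted. -/
def SgraphMinus (n : ℕ) : SimpleGraph (Fin n) where
  Adj i j := i ≠ j ∧ (i.val < 2 ∨ j.val < 2) ∧
    ¬(i.val = 1 ∧ j.val = 2) ∧ ¬(i.val = 2 ∧ j.val = 1)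
  symm := by
    constructor; rintro i j ⟨h1, h2, h3, h4⟩
    exact ⟨h1.symm, h2.symm, fun hc => h4 ⟨hc.2, hc.1⟩, fun hc => h3 ⟨hc.2, hc.1⟩⟩
  loopless := by constructor; rintro i ⟨h1, _⟩; exact h1 rfl

/-- The graph obtained from `S_{k,2}` (on vertices `0,…,k-1`, with `0,1` dominating)
by joining the maximum degree vertex `0` to `l` new vertices `k,…,k+l-1`. -/
def Fgraph (k l : ℕ) : SimpleGraph (Fin (k + l)) where
  Adj i j := i ≠ j ∧ (i.val = 0 ∨ j.val = 0 ∨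
    (i.val < k ∧ j.val < k ∧ (i.val = 1 ∨ j.val = 1)))
  symm := by
    constructor; rintro i j ⟨h1, h2⟩
    refine ⟨h1.symm, ?_⟩
    rcases h2 with h | h | ⟨ha, hb, hc⟩
    · exact Or.inr (Or.inl h)
    · exact Or.inl h
    · exact Or.inr (Or.inr ⟨hb, ha, hc.symm⟩)
  loopless := by constructor; rintro i ⟨h1, _⟩; exact h1 rfl

/-- The star `K_{1,t}` with center `0`. -/
def starG (t : ℕ) : SimpleGraph (Fin (t + 1)) where
  Adj i j := i ≠ j ∧ (i.val = 0 ∨ j.val = 0)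
  symm := by constructor; rintro i j ⟨h1, h2⟩; exact ⟨h1.symm, h2.symm⟩
  loopless := by constructor; rintro i ⟨h1, _⟩; exact h1 rfl

/-- `e(S)`: the number of edges of `G` with both endpoints in `S`. -/
noncomputable def eIn {V : Type*} (G : SimpleGraph V) (S : Set V) : ℕ :=
  {e ∈ G.edgeSet | ∀ v ∈ e, v ∈ S}.ncard

/-- `e(S,T)`: the number of edges of `G` with one endpoint in `S` and the other in `T`. -/
noncomputable def eBetween {V : Type*} (G : SimpleGraph V) (S T : Set V) : ℕ :=
  {e ∈ G.edgeSet | ∃ a ∈ S, ∃ b ∈ T, e = s(a, b)}.ncard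

/-- `G` attains the maximum spectral radius among all `H(4,3)`-free graphs with `m`
edges and no isolated vertices. -/
def IsExtremal (m : ℕ) {V : Type*} [Fintype V] (G : SimpleGraph V) : Prop :=
  H43Free G ∧ G.edgeSet.ncard = m ∧ (∀ v : V, ∃ w, G.Adj v w) ∧
    ∀ (n : ℕ) (G' : SimpleGraph (Fin n)), H43Free G' → G'.edgeSet.ncard = m →
      (∀ v, ∃ w, G'.Adj v w) → specRad G' ≤ specRad G

/-! Summing the eigen-equation over `N(u)` gives `ρ² x_u = Σ_{v ~ u} Σ_{w ~ v} x_w`, and each inner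
sum splits into `w = u`, `w ∈ N` and `w ∈ W`. Subtracting `ρ x_u = Σ_{v ∈ N} x_v` leaves
`|N| x_u + Σ_{w ∈ N} (d_N(w) - 1) x_w + Σ_{N–W edges} x_w`. The coefficient `d_N(w) - 1` is
nonnegative on `A₊` and equals `-1` on `A₀`, so `x_w ≤ x_u` may be used everywhere except on `A₀`;
finally `Σ_{w ∈ A₊} d_N(w) = 2 e(N) = 2 e(A₊)`. -/

open Finset

section Neighborhoods

variable {V : Type*} [Fintype V] {G : SimpleGraph V} [DecidableRel G.Adj]

theorem adjMat_mulVec_apply (x : V → ℝ) (v : V) :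
    (adjMat G *ᵥ x) v = ∑ w ∈ G.neighborFinset v, x w := by
  classical
  simp [mulVec, dotProduct, adjMat, neighborFinset_eq_filter, sum_filter]

theorem sum_neighborFinset_eq_of_mulVec_eq {x : V → ℝ} {ρ : ℝ} (heig : adjMat G *ᵥ x = ρ • x)
    (v : V) :
    ∑ w ∈ G.neighborFinset v, x w = ρ * x v := by
  rw [← adjMat_mulVec_apply, heig, Pi.smul_apply, smul_eq_mul]

variable [DecidableEq V]

theorem sum_neighborFinset_eq_add_add {M : Type*} [AddCommMonoid M] (f : V → M) {u v : V}
    (hvu : G.Adj v u) {N : Finset V} (hu : u ∉ N) :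
    ∑ w ∈ G.neighborFinset v, f w = f u + ∑ w ∈ G.neighborFinset v ∩ N, f w
      + ∑ w ∈ G.neighborFinset v ∩ (insert u N)ᶜ, f w := by
  rw [← sum_inter_add_sum_sdiff _ (insert u N), inter_insert_of_mem (by simpa using hvu),
    sum_insert (by simp [hu]), sdiff_eq_inter_compl]

theorem sum_sum_neighborFinset_inter_eq_sum_card_smul {M : Type*} [AddCommMonoid M]
    (f : V → M) (S : Finset V) :
    ∑ v ∈ S, ∑ w ∈ G.neighborFinset v ∩ S, f w = ∑ w ∈ S, #(G.neighborFinset w ∩ S) • f w := by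
  rw [sum_comm' (t' := S) (s' := fun w => G.neighborFinset w ∩ S)]
  · simp_rw [sum_const]
  · intro v w
    simp only [mem_inter, mem_neighborFinset, G.adj_comm v w]
    tauto

end Neighborhoods

theorem eIn_sep_exists_adj {V : Type*} (G : SimpleGraph V) (S : Set V) :
    eIn G {v ∈ S | ∃ w ∈ S, G.Adj v w} = eIn G S := by
  unfold eIn
  congr 1
  ext e
  induction e using Sym2.ind with
  | _ a b =>
    simp only [Set.mem_sep_iff, mem_edgeSet, Sym2.mem_iff, forall_eq_or_imp, forall_eq]
    constructor
    · rintro ⟨hab, ⟨ha, -⟩, hb, -⟩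
      exact ⟨hab, ha, hb⟩
    · rintro ⟨hab, ha, hb⟩
      exact ⟨hab, ⟨ha, b, hb, hab⟩, hb, a, ha, hab.symm⟩

section EdgeCounts

variable {V : Type*} [Fintype V] [DecidableEq V] {G : SimpleGraph V} [DecidableRel G.Adj]

theorem two_mul_eIn (S : Finset V) :
    2 * eIn G S = ∑ v ∈ S, #(G.neighborFinset v ∩ S) := by
  classical
  set H := ((⊤ : G.Subgraph).induce (S : Set V)).spanningCoe
  have hH : ∀ a b, H.Adj a b ↔ G.Adj a b ∧ a ∈ S ∧ b ∈ S := by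
    intro a b
    simp only [H, Subgraph.spanningCoe_adj, Subgraph.induce_adj, SetLike.mem_coe,
      Subgraph.top_adj]
    tauto
  have hedges : {e ∈ G.edgeSet | ∀ v ∈ e, v ∈ (S : Set V)} = H.edgeFinset := by
    ext e
    induction e using Sym2.ind with
    | _ a b => simp [hH]
  have hdeg : ∀ v, H.degree v = if v ∈ S then #(G.neighborFinset v ∩ S) else 0 := by
    intro v
    rw [← card_neighborFinset_eq_degree]
    split_ifs with hv
    · congr 1; ext w; simp [hH, hv]
    · rw [card_eq_zero, eq_empty_iff_forall_notMem]
      simp [hH, hv]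
  rw [eIn, hedges, Set.ncard_coe_finset, ← sum_degrees_eq_twice_card_edges]
  simp_rw [hdeg, sum_ite_mem, univ_inter]

theorem eBetween_eq_sum_card {S T : Finset V} (hST : Disjoint S T) :
    eBetween G S T = ∑ v ∈ S, #(G.neighborFinset v ∩ T) := by
  have hset : {e ∈ G.edgeSet | ∃ a ∈ (S : Set V), ∃ b ∈ (T : Set V), e = s(a, b)}
      = (fun p : V × V => s(p.1, p.2)) '' (G.interedges S T : Set (V × V)) := by
    ext e
    simp only [Set.mem_image, mem_coe, mem_interedges_iff, Prod.exists]
    constructor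
    · rintro ⟨he, a, ha, b, hb, rfl⟩
      exact ⟨a, b, ⟨ha, hb, he⟩, rfl⟩
    · rintro ⟨a, b, ⟨ha, hb, hab⟩, rfl⟩
      exact ⟨hab, a, ha, b, hb, rfl⟩
  have hinj : Set.InjOn (fun p : V × V => s(p.1, p.2)) (G.interedges S T) := by
    rintro ⟨a, b⟩ hab ⟨c, d⟩ hcd h
    simp only [mem_coe, mem_interedges_iff, Sym2.eq_iff] at hab hcd h
    rcases h with ⟨rfl, rfl⟩ | ⟨rfl, rfl⟩
    · rfl
    · exact (Finset.disjoint_left.mp hST hab.1 hcd.2.1).elim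
  rw [eBetween, hset, hinj.ncard_image, Set.ncard_coe_finset, interedges_def,
    card_filter, sum_product]
  refine sum_congr rfl fun v _ => ?_
  rw [← card_filter]
  congr 1
  ext w
  simp [and_comm]

end EdgeCounts

section PerronVector

variable {V : Type*} [Fintype V] [DecidableEq V] {G : SimpleGraph V} [DecidableRel G.Adj]
  {x : V → ℝ}

theorem sq_sub_mul_eq_of_mulVec_eq {ρ : ℝ} (heig : adjMat G *ᵥ x = ρ • x) (u : V) :
    (ρ ^ 2 - ρ) * x u = #(G.neighborFinset u) * x u
      + ∑ w ∈ G.neighborFinset u, ((#(G.neighborFinset w ∩ G.neighborFinset u) : ℝ) - 1) * x w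
      + ∑ v ∈ G.neighborFinset u,
          ∑ w ∈ G.neighborFinset v ∩ (insert u (G.neighborFinset u))ᶜ, x w := by
  set N := G.neighborFinset u
  have hρ : ρ * x u = ∑ v ∈ N, x v := (sum_neighborFinset_eq_of_mulVec_eq heig u).symm
  have hρ2 : ρ ^ 2 * x u = ∑ v ∈ N, (x u + ∑ w ∈ G.neighborFinset v ∩ N, x w
      + ∑ w ∈ G.neighborFinset v ∩ (insert u N)ᶜ, x w) := by
    rw [sq, mul_assoc, hρ, mul_sum]
    refine sum_congr rfl fun v hv => ?_
    rw [← sum_neighborFinset_eq_of_mulVec_eq heig v]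
    exact sum_neighborFinset_eq_add_add x ((mem_neighborFinset _ _ _).mp hv).symm
      (G.notMem_neighborFinset_self u)
  rw [sub_mul, hρ2, hρ, sum_add_distrib, sum_add_distrib,
    sum_sum_neighborFinset_inter_eq_sum_card_smul]
  simp only [sum_const, nsmul_eq_mul, sub_mul, one_mul, sum_sub_distrib]
  ring

theorem sum_card_sub_one_mul_le {M : ℝ} (S : Finset V) (hM : ∀ v ∈ S, x v ≤ M) :
    ∑ w ∈ S, ((#(G.neighborFinset w ∩ S) : ℝ) - 1) * x w
      ≤ (2 * eIn G S - #{v ∈ S | ∃ w ∈ S, G.Adj v w}) * M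
        - ∑ w ∈ S \ {v ∈ S | ∃ w ∈ S, G.Adj v w}, x w := by
  set P := {v ∈ S | ∃ w ∈ S, G.Adj v w}
  set d := fun w => #(G.neighborFinset w ∩ S)
  have hd_zero : ∀ w ∈ S \ P, d w = 0 := by
    intro w hw
    simp only [P, mem_sdiff, mem_filter, not_and, not_exists] at hw
    simpa [d, eq_empty_iff_forall_notMem] using fun v hv hS => hw.2 hw.1 v hS hv
  have hd_pos : ∀ w ∈ P, 1 ≤ d w := by
    intro w hw
    obtain ⟨-, v, hv, hwv⟩ := mem_filter.mp hw
    exact card_pos.mpr ⟨v, by simpa [hv] using hwv⟩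
  have hsum_d : ∑ w ∈ P, (d w : ℝ) = 2 * eIn G S := by
    have hsplit := sum_sdiff (filter_subset (fun v => ∃ w ∈ S, G.Adj v w) S)
      (f := fun w => (d w : ℝ))
    rw [sum_eq_zero fun w hw => by simp [hd_zero w hw], zero_add] at hsplit
    rw [hsplit]
    exact_mod_cast (two_mul_eIn S).symm
  have hA0 : ∑ w ∈ S \ P, ((d w : ℝ) - 1) * x w = -∑ w ∈ S \ P, x w := by
    rw [← sum_neg_distrib]
    exact sum_congr rfl fun w hw => by simp [hd_zero w hw]
  have hAp : ∑ w ∈ P, ((d w : ℝ) - 1) * x w ≤ ∑ w ∈ P, ((d w : ℝ) - 1) * M :=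
    sum_le_sum fun w hw => mul_le_mul_of_nonneg_left (hM w (filter_subset _ S hw))
      (sub_nonneg.mpr (by exact_mod_cast hd_pos w hw))
  have hAp_sum : ∑ w ∈ P, ((d w : ℝ) - 1) * M = (2 * eIn G S - #P) * M := by
    rw [← sum_mul, sum_sub_distrib, hsum_d, sum_const, nsmul_one]
  rw [← sum_sdiff (filter_subset (fun v => ∃ w ∈ S, G.Adj v w) S)]
  linarith

theorem sum_sum_neighborFinset_inter_le {M : ℝ} {S T : Finset V} (hST : Disjoint S T)
    (hM : ∀ v ∈ T, x v ≤ M) :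
    ∑ v ∈ S, ∑ w ∈ G.neighborFinset v ∩ T, x w ≤ eBetween G S T * M := by
  rw [eBetween_eq_sum_card hST, Nat.cast_sum, sum_mul]
  gcongr with v
  exact (sum_le_card_nsmul _ _ _ fun w hw => hM w (mem_inter.mp hw).2).trans_eq
    (nsmul_eq_mul _ _)

end PerronVector

theorem stmt8_general {V : Type*} [Fintype V] (G : SimpleGraph V)
    (x : V → ℝ) (hxpos : ∀ v, 0 < x v)
    (heig : (adjMat G).mulVec x = specRad G • x)
    (u : V) (hmaxx : ∀ v, x v ≤ x u)
    (N W Ap A0 : Set V)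
    (hN : N = G.neighborSet u)
    (hW : W = (insert u N)ᶜ)
    (hAp : Ap = {v ∈ N | ∃ w ∈ N, G.Adj v w})
    (hA0 : A0 = N \ Ap) :
    specRad G ^ 2 - specRad G ≤
      (N.ncard : ℝ) + 2 * (eIn G Ap : ℝ) - (Ap.ncard : ℝ) + (eBetween G N W : ℝ)
        - ∑ᶠ v ∈ A0, x v / x u := by
  classical
  subst hN hW hAp hA0
  have hApf : {v ∈ (G.neighborFinset u : Set V) | ∃ w ∈ (G.neighborFinset u : Set V), G.Adj v w}
      = ↑({v ∈ G.neighborFinset u | ∃ w ∈ G.neighborFinset u, G.Adj v w} : Finset V) := by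
    ext; simp
  rw [← coe_neighborFinset, eIn_sep_exists_adj, hApf, ← coe_sdiff, ← coe_insert, ← coe_compl,
    Set.ncard_coe_finset, Set.ncard_coe_finset, finsum_mem_coe_finset, ← sum_div]
  have hidentity := sq_sub_mul_eq_of_mulVec_eq heig u
  have hinside := sum_card_sub_one_mul_le (G := G) (G.neighborFinset u) fun v _ => hmaxx v
  have houtside := sum_sum_neighborFinset_inter_le (G := G) (S := G.neighborFinset u)
    (disjoint_compl_right_iff.mpr (subset_insert u _)) fun v _ => hmaxx v
  have hxu := hxpos u
  rw [sub_div' hxu.ne', le_div_iff₀ hxu]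
  linarith

/-- For a connected graph `G` with Perron vector `x` maximized at `u`,
`ρ² − ρ ≤ |N| + 2 e(A₊) − |A₊| + e(N,W) − Σ_{v ∈ A₀} x_v / x_u`. -/
theorem stmt8 {V : Type*} [Fintype V] (G : SimpleGraph V) (hconn : G.Connected)
    (x : V → ℝ) (hxpos : ∀ v, 0 < x v)
    (heig : (adjMat G).mulVec x = specRad G • x)
    (u : V) (hmaxx : ∀ v, x v ≤ x u)
    (N W Ap A0 : Set V)
    (hN : N = G.neighborSet u)
    (hW : W = (insert u N)ᶜ)
    (hAp : Ap = {v ∈ N | ∃ w ∈ N, G.Adj v w})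
    (hA0 : A0 = N \ Ap) :
    specRad G ^ 2 - specRad G ≤
      (N.ncard : ℝ) + 2 * (eIn G Ap : ℝ) - (Ap.ncard : ℝ) + (eBetween G N W : ℝ)
        - ∑ᶠ v ∈ A0, x v / x u :=
  stmt8_general G x hxpos heig u hmaxx N W Ap A0 hN hW hAp hA0
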